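/- arXiv:2106.03622 — 2 statements merged into one kernel-verified Lean document; each statement's English description precedes it below -/
import Mathlib

section
/- Let g : ℝ × ℝ → ℝ × ℝ fix the horizontal axis pointwise (g (x, 0) = (x, 0) for all x : ℝ), let p = (a, 0), assume g is differentiable at p, and assume the determinant of the derivative of g at p is positive (LinearMap.det of the linear part of fderiv ℝ g p is > 0, i.e. g is orientation-preserving at p). Then the derivative of g at p preserves the upper half-plane of directions: for every vector v : ℝ × ℝ with v.2 > 0, one has (fderiv ℝ g p v).2 > 0. -/
/-!
Differentiating `g (x, 0) = (x, 0)` along the axis shows that `D = Dg(a, 0)` fixes `(1, 0)`.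
In the basis `(1, 0), (0, 1)` the matrix of `D` is then upper triangular with diagonal
`1, (D (0, 1)).2`, so `(D v).2 = v.2 * det D`.
-/

theorem differentiableAt_of_det_fderiv_ne_zero {𝕜 E : Type*} [NontriviallyNormedField 𝕜]
    [NormedAddCommGroup E] [NormedSpace 𝕜 E] [FiniteDimensional 𝕜 E] [Nontrivial E]
    {f : E → E} {x : E} (h : LinearMap.det (fderiv 𝕜 f x).toLinearMap ≠ 0) :
    DifferentiableAt 𝕜 f x := by
  by_contra hf
  rw [fderiv_zero_of_not_differentiableAt hf, ContinuousLinearMap.toLinearMap_zero,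
    LinearMap.det_zero, zero_pow Module.finrank_pos.ne'] at h
  exact h rfl

theorem fderiv_apply_mk_zero_of_forall_apply_mk_zero {𝕜 E F : Type*}
    [NontriviallyNormedField 𝕜] [NormedAddCommGroup E] [NormedSpace 𝕜 E]
    [NormedAddCommGroup F] [NormedSpace 𝕜 F]
    {g : E × F → E × F} (hfix : ∀ x : E, g (x, 0) = (x, 0)) {a : E}
    (hg : DifferentiableAt 𝕜 g (a, 0)) (v : E) :
    fderiv 𝕜 g (a, 0) (v, 0) = (v, 0) := by
  have hinl : HasFDerivAt (fun x : E => ((x, 0) : E × F)) (ContinuousLinearMap.inl 𝕜 E F) a :=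
    (ContinuousLinearMap.inl 𝕜 E F).hasFDerivAt
  have hcomp : HasFDerivAt (fun x : E => ((x, 0) : E × F))
      ((fderiv 𝕜 g (a, 0)).comp (ContinuousLinearMap.inl 𝕜 E F)) a := by
    simpa only [Function.comp_def, hfix] using hg.hasFDerivAt.comp a hinl
  simpa using congrArg (· v) (hcomp.unique hinl)

namespace LinearMap

variable {R : Type*} [CommRing R]

theorem det_prod (f : R × R →ₗ[R] R × R) :
    LinearMap.det f = (f (1, 0)).1 * (f (0, 1)).2 - (f (0, 1)).1 * (f (1, 0)).2 := by
  rw [← det_toMatrix (Module.Basis.finTwoProd R), Matrix.det_fin_two]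
  simp [toMatrix_apply]

theorem snd_apply_eq_snd_mul_det (f : R × R →ₗ[R] R × R) (hf : f (1, 0) = (1, 0))
    (v : R × R) : (f v).2 = v.2 * LinearMap.det f := by
  have hv : v = v.1 • ((1 : R), (0 : R)) + v.2 • ((0 : R), (1 : R)) := by simp
  rw [det_prod, hf, hv, map_add, map_smul, map_smul, hf]
  simp

end LinearMap

theorem fderiv_preserves_upper_halfplane_general (g : ℝ × ℝ → ℝ × ℝ)
    (hfix : ∀ x : ℝ, g (x, 0) = (x, 0)) (a : ℝ)
    (hdet : 0 < LinearMap.det ((fderiv ℝ g (a, 0)).toLinearMap)) :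
    ∀ v : ℝ × ℝ, 0 < v.2 → 0 < (fderiv ℝ g (a, 0) v).2 := by
  intro v hv
  have hdiff := differentiableAt_of_det_fderiv_ne_zero hdet.ne'
  have hfix_deriv := fderiv_apply_mk_zero_of_forall_apply_mk_zero hfix hdiff 1
  rw [← ContinuousLinearMap.coe_coe, LinearMap.snd_apply_eq_snd_mul_det _ hfix_deriv]
  exact mul_pos hv hdet

/-- If g fixes the horizontal axis pointwise, is differentiable at p = (a, 0), and is
orientation-preserving at p, then Dg_p maps vectors pointing up to vectors pointing up. -/
theorem fderiv_preserves_upper_halfplane (g : ℝ × ℝ → ℝ × ℝ)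
    (hfix : ∀ x : ℝ, g (x, 0) = (x, 0)) (a : ℝ)
    (hdiff : DifferentiableAt ℝ g (a, 0))
    (hdet : 0 < LinearMap.det ((fderiv ℝ g (a, 0)).toLinearMap)) :
    ∀ v : ℝ × ℝ, 0 < v.2 → 0 < (fderiv ℝ g (a, 0) v).2 :=
  fderiv_preserves_upper_halfplane_general g hfix a hdet
end

section
/- Let X be a preconnected topological space equipped with a Borel measure μ, let h > 0 be a real number, and let s ⊆ X be a measurable set with μ s ≤ ENNReal.ofReal h. If f : X → ℝ is a continuous function with ∫ x in s, f x dμ > h and f attains the value 0 at some point of X, then f attains the value 1: there exists x ∈ X with f x = 1. -/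
open MeasureTheory

theorem setIntegral_le_mul_of_forall_le_of_measure_le {X : Type*} [MeasurableSpace X]
    {μ : Measure X} {s : Set X} (hs : MeasurableSet s) {f : X → ℝ} {c h : ℝ} (hc : 0 ≤ c)
    (hh : 0 ≤ h) (hμs : μ s ≤ ENNReal.ofReal h) (hf : ∀ x ∈ s, f x ≤ c) :
    ∫ x in s, f x ∂μ ≤ c * h := by
  by_cases hfs : IntegrableOn f s μ
  · have hμs_fin : μ s ≠ ⊤ := ne_top_of_le_ne_top ENNReal.ofReal_ne_top hμs
    calc ∫ x in s, f x ∂μ ≤ ∫ _ in s, c ∂μ :=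
          setIntegral_mono_on hfs (integrableOn_const hμs_fin) hs hf
      _ = μ.real s * c := by rw [setIntegral_const, smul_eq_mul]
      _ ≤ c * h := by
          rw [mul_comm]
          exact mul_le_mul_of_nonneg_left (ENNReal.toReal_le_of_le_ofReal hh hμs) hc
  · rw [integral_undef hfs]
    exact mul_nonneg hc hh

theorem exists_lt_of_measure_le_of_setIntegral_gt {X : Type*} [MeasurableSpace X]
    {μ : Measure X} {s : Set X} (hs : MeasurableSet s) {f : X → ℝ} {c h : ℝ} (hc : 0 ≤ c)
    (hh : 0 ≤ h) (hμs : μ s ≤ ENNReal.ofReal h) (hint : c * h < ∫ x in s, f x ∂μ) :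
    ∃ x ∈ s, c < f x := by
  by_contra! hle
  exact hint.not_ge (setIntegral_le_mul_of_forall_le_of_measure_le hs hc hh hμs hle)

theorem exists_value_one_of_setIntegral_gt_general {X : Type*} [TopologicalSpace X]
    [MeasurableSpace X]
    (μ : Measure X) (hX : IsPreconnected (Set.univ : Set X))
    (h : ℝ) (hh : 0 < h) (s : Set X) (hs : MeasurableSet s)
    (hμs : μ s ≤ ENNReal.ofReal h)
    (f : X → ℝ) (hf : Continuous f)
    (hint : ∫ x in s, f x ∂μ > h) (h0 : ∃ x, f x = 0) :
    ∃ x, f x = 1 := by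
  obtain ⟨x₀, hx₀⟩ := h0
  obtain ⟨x₁, -, hx₁⟩ :=
    exists_lt_of_measure_le_of_setIntegral_gt hs zero_le_one hh.le hμs (by rwa [one_mul])
  have : PreconnectedSpace X := ⟨hX⟩
  exact intermediate_value_univ x₀ x₁ hf ⟨hx₀ ▸ zero_le_one, hx₁.le⟩

/-- If a measurable set s has measure at most h > 0 and a continuous function f on a
preconnected Borel measure space vanishes somewhere and has integral greater than h
over s, then f attains the value 1. -/
theorem exists_value_one_of_setIntegral_gt {X : Type*} [TopologicalSpace X]
    [MeasurableSpace X] [BorelSpace X]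
    (μ : Measure X) (hX : IsPreconnected (Set.univ : Set X))
    (h : ℝ) (hh : 0 < h) (s : Set X) (hs : MeasurableSet s)
    (hμs : μ s ≤ ENNReal.ofReal h)
    (f : X → ℝ) (hf : Continuous f)
    (hint : ∫ x in s, f x ∂μ > h) (h0 : ∃ x, f x = 0) :
    ∃ x, f x = 1 :=
  exists_value_one_of_setIntegral_gt_general μ hX h hh s hs hμs f hf hint h0
end
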